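/- Let S be a real symmetric unreduced tridiagonal N×N matrix (N > 1) with eigenvalues λ_1 = 0 < λ_2 < ... < λ_N. Then every trailing principal submatrix of S of size p×p, for 1 ≤ p ≤ N−1, is positive definite. -/

import Mathlib

open Matrix Polynomial

open scoped ComplexOrder

/-!
The spectral hypotheses make `S` positive semidefinite, and the quadratic form of a trailing block
is that of `S` on vectors vanishing on the first `N - p ≥ 1` coordinates, so it is nonnegative.
If it vanishes at such a vector `y`, then `S y = 0`; as `y₀ = 0` and the superdiagonal of `S` has
no zero entry, the rows of `S y = 0` force `y₁ = 0`, `y₂ = 0`, … in turn.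
-/

def IsTridiagonal {N : ℕ} (M : Matrix (Fin N) (Fin N) ℝ) : Prop :=
  ∀ i j : Fin N, ((i : ℕ) + 1 < j ∨ (j : ℕ) + 1 < i) → M i j = 0

def IsUnreduced {N : ℕ} (M : Matrix (Fin N) (Fin N) ℝ) : Prop :=
  ∀ i j : Fin N, (i : ℕ) + 1 = j → (M i j ≠ 0 ∧ M j i ≠ 0)

namespace Matrix

variable {m n 𝕜 : Type*} [Fintype m] [Fintype n]

lemma dotProduct_mulVec_extend_zero {R : Type*} [NonUnitalNonAssocSemiring R] [StarAddMonoid R]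
    (M : Matrix n n R) {e : m → n} (he : Function.Injective e) (x : m → R) :
    star (Function.extend e x 0) ⬝ᵥ M *ᵥ Function.extend e x 0
      = star x ⬝ᵥ M.submatrix e e *ᵥ x := by
  have hout (j : n) (hj : j ∉ Set.range e) : Function.extend e x 0 j = 0 :=
    Function.extend_apply' _ _ _ fun ⟨i, hi⟩ => hj ⟨i, hi⟩
  have hmulVec (i : m) : (M *ᵥ Function.extend e x 0) (e i) = (M.submatrix e e *ᵥ x) i :=
    (Fintype.sum_of_injective e he _ _ (fun j hj => by simp [hout j hj])
      (fun k => by simp [he.extend_apply])).symm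
  exact (Fintype.sum_of_injective e he _ _ (fun j hj => by simp [hout j hj])
    (fun i => by simp [he.extend_apply, hmulVec])).symm

variable [RCLike 𝕜]

theorem IsHermitian.posSemidef_of_charpoly_eq_prod [DecidableEq n] {A : Matrix n n 𝕜}
    (hA : A.IsHermitian) {μ : n → 𝕜} (hchar : A.charpoly = ∏ i, (X - C (μ i)))
    (hμ : ∀ i, 0 ≤ μ i) :
    A.PosSemidef := by
  refine hA.posSemidef_iff_eigenvalues_nonneg.2 fun i => ?_
  have hroot : A.charpoly.eval (hA.eigenvalues i : 𝕜) = 0 := by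
    rw [hA.charpoly_eq, eval_prod]
    exact Finset.prod_eq_zero (Finset.mem_univ i) (by simp)
  rw [hchar, eval_prod, Finset.prod_eq_zero_iff] at hroot
  obtain ⟨j, -, hj⟩ := hroot
  rw [eval_sub, eval_X, eval_C, sub_eq_zero] at hj
  exact RCLike.ofReal_nonneg.1 (hj ▸ hμ j)

theorem PosSemidef.posDef_submatrix {M : Matrix n n 𝕜} (hM : M.PosSemidef) {e : m → n}
    (he : Function.Injective e)
    (hker : ∀ y, M *ᵥ y = 0 → (∀ j ∉ Set.range e, y j = 0) → y = 0) :
    (M.submatrix e e).PosDef := by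
  refine PosDef.of_dotProduct_mulVec_pos (hM.1.submatrix e) fun x hx => ?_
  rw [← dotProduct_mulVec_extend_zero M he]
  refine (hM.dotProduct_mulVec_nonneg _).lt_of_ne' fun hzero => hx ?_
  have hy := hker _ ((hM.dotProduct_mulVec_zero_iff _).1 hzero)
    fun j hj => Function.extend_apply' _ _ _ fun ⟨i, hi⟩ => hj ⟨i, hi⟩
  funext i
  simpa [he.extend_apply] using congrFun hy (e i)

end Matrix

theorem IsTridiagonal.eq_zero_of_mulVec_eq_zero {N : ℕ} {S : Matrix (Fin N) (Fin N) ℝ}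
    (htri : IsTridiagonal S) (hunr : IsUnreduced S) {y : Fin N → ℝ} (hy : S *ᵥ y = 0)
    (hN : 0 < N) (h0 : y ⟨0, hN⟩ = 0) : y = 0 := by
  suffices h : ∀ n (hn : n < N), y ⟨n, hn⟩ = 0 from funext fun j => h j j.2
  intro n
  induction n using Nat.strong_induction_on with
  | _ n ih =>
    intro hn
    rcases n with _ | n
    · exact h0
    -- row `n` involves only `y₀, …, y_{n+1}`, all but the last already known to vanish
    have hrow :
        (S *ᵥ y) ⟨n, by omega⟩ = S ⟨n, by omega⟩ ⟨n + 1, hn⟩ * y ⟨n + 1, hn⟩ := by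
      rw [mulVec, dotProduct]
      refine Finset.sum_eq_single_of_mem _ (Finset.mem_univ _) fun l _ hl => ?_
      rcases lt_or_gt_of_ne (Fin.val_ne_of_ne hl) with hlt | hgt
      · rw [ih l (by omega) l.2, mul_zero]
      · rw [htri _ _ (Or.inl hgt), zero_mul]
    rw [hy, Pi.zero_apply, eq_comm, mul_eq_zero] at hrow
    exact hrow.resolve_left (hunr _ _ rfl).1

/-- For a real symmetric unreduced tridiagonal matrix (N > 1) with eigenvalues
`0 = λ₁ < λ₂ < ... < λ_N`, every trailing principal submatrix of size `p × p`,
`1 ≤ p ≤ N - 1`, is positive definite. -/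
theorem stmt5 {N : ℕ} (hN : 1 < N) (S : Matrix (Fin N) (Fin N) ℝ)
    (hS : S.IsSymm) (htri : IsTridiagonal S) (hunr : IsUnreduced S)
    (μ : Fin N → ℝ) (hμ : StrictMono μ) (hμ0 : μ ⟨0, by omega⟩ = 0)
    (hchar : S.charpoly = ∏ i, (X - C (μ i))) :
    ∀ (p : ℕ) (_ : 1 ≤ p) (hp : p < N),
      (S.submatrix (fun i : Fin p => (⟨N - p + (i : ℕ), by omega⟩ : Fin N))
        (fun i : Fin p => (⟨N - p + (i : ℕ), by omega⟩ : Fin N))).PosDef := by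
  intro p _ hp
  have hμ_nonneg (i : Fin N) : 0 ≤ μ i :=
    hμ0 ▸ hμ.monotone (Fin.mk_le_of_le_val (Nat.zero_le _))
  have hpsd := (isHermitian_iff_isSymm.2 hS).posSemidef_of_charpoly_eq_prod hchar hμ_nonneg
  refine hpsd.posDef_submatrix (fun i j hij => Fin.ext (by simpa using hij))
    fun y hy hout => htri.eq_zero_of_mulVec_eq_zero hunr hy (by omega) (hout _ ?_)
  rintro ⟨i, hi⟩
  simp only [Fin.ext_iff] at hi
  omega
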